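/- arXiv:2112.12210 — 3 statements merged into one kernel-verified Lean document; each statement's English description precedes it below -/
import Mathlib

section
/- (Theorem 1, Safety Invariance, trajectory form.) Let s, m be natural numbers, let E = ℝ^s be the state space, let f : E → E, let g : E → L(ℝ^m, E) assign to each state a linear map from controls to E, and let k : E → ℝ^m be a feedback controller. Let h : E → ℝ be differentiable, and let α : ℝ → ℝ be strictly increasing with α(0) = 0. Suppose the controller satisfies the control-barrier-function condition: for every y ∈ E, Dh(y)(f(y) + g(y)(k(y))) ≥ −α(h(y)), where Dh(y) is the Fréchet derivative of h at y. Let x : ℝ → E be differentiable with x′(t) = f(x(t)) + g(x(t))(k(x(t))) for all t ≥ 0. If h(x(0)) ≥ 0, then h(x(t)) ≥ 0 for all t ≥ 0; that is, the closed-loop trajectory remains in the safe set S = {y ∈ E : h(y) ≥ 0}. -/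
/-- **Safety Invariance (Theorem 1, trajectory form).**
If the feedback controller `k` satisfies the control barrier function condition
for the CBF `h` with extended class-K function `α`, then any closed-loop
trajectory starting in the safe set `{y | h y ≥ 0}` remains in it for all `t ≥ 0`. -/
theorem safety_invariance
    (s m : ℕ)
    (f : EuclideanSpace ℝ (Fin s) → EuclideanSpace ℝ (Fin s))
    (g : EuclideanSpace ℝ (Fin s) →
      (EuclideanSpace ℝ (Fin m) →L[ℝ] EuclideanSpace ℝ (Fin s)))
    (k : EuclideanSpace ℝ (Fin s) → EuclideanSpace ℝ (Fin m))
    (h : EuclideanSpace ℝ (Fin s) → ℝ)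
    (hh : Differentiable ℝ h)
    (α : ℝ → ℝ) (hα : StrictMono α) (hα0 : α 0 = 0)
    (hcbf : ∀ y, fderiv ℝ h y (f y + g y (k y)) ≥ -α (h y))
    (x : ℝ → EuclideanSpace ℝ (Fin s))
    (hx : Differentiable ℝ x)
    (hode : ∀ t ≥ (0 : ℝ), HasDerivAt x (f (x t) + g (x t) (k (x t))) t)
    (h0 : h (x 0) ≥ 0) :
    ∀ t ≥ (0 : ℝ), h (x t) ≥ 0 := by
  set φ : ℝ → ℝ := fun t => h (x t) with hφ
  have hφdiff : Differentiable ℝ φ := hh.comp hx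
  have hφderiv : ∀ t ≥ (0 : ℝ),
      HasDerivAt φ (fderiv ℝ h (x t) (f (x t) + g (x t) (k (x t)))) t := by
    intro t ht
    exact ((hh (x t)).hasFDerivAt.comp_hasDerivAt t (hode t ht))
  by_contra hcon
  push_neg at hcon
  obtain ⟨t₁, ht₁0, ht₁⟩ := hcon
  set A : Set ℝ := {t | t ∈ Set.Icc 0 t₁ ∧ φ t ≥ 0} with hA
  have hAclosed : IsClosed A := by
    have : A = Set.Icc 0 t₁ ∩ φ ⁻¹' (Set.Ici 0) := by
      ext t; simp [hA, Set.mem_Icc, and_comm]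
    rw [this]
    exact isClosed_Icc.inter (isClosed_Ici.preimage hφdiff.continuous)
  have hAne : A.Nonempty := ⟨0, ⟨le_refl 0, ht₁0⟩, h0⟩
  have hAbdd : BddAbove A := ⟨t₁, fun t ht => ht.1.2⟩
  set T := sSup A with hT
  have hTA : T ∈ A := hAclosed.csSup_mem hAne hAbdd
  have hT0 : (0 : ℝ) ≤ T := hTA.1.1
  have hTφ : φ T ≥ 0 := hTA.2
  have hTlt : T < t₁ := lt_of_le_of_ne hTA.1.2 (by
    intro hEq
    rw [hEq] at hTφ
    exact absurd hTφ (not_le.mpr ht₁))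
  have hneg : ∀ t ∈ Set.Ioo T t₁, φ t < 0 := by
    intro t ht
    by_contra hge
    push_neg at hge
    have : t ∈ A := ⟨⟨hT0.trans ht.1.le, ht.2.le⟩, hge⟩
    exact absurd (le_csSup hAbdd this) (not_le.mpr ht.1)
  have hmono : StrictMonoOn φ (Set.Icc T t₁) := by
    apply strictMonoOn_of_deriv_pos (convex_Icc T t₁) hφdiff.continuous.continuousOn
    intro t ht
    rw [interior_Icc] at ht
    have ht0 : (0 : ℝ) ≤ t := hT0.trans ht.1.le
    have hd := hφderiv t ht0
    rw [hd.deriv]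
    have h1 : α (φ t) < 0 := by
      have := hα (hneg t ht)
      rwa [hα0] at this
    calc (0:ℝ) < -α (φ t) := by linarith
      _ ≤ _ := hcbf (x t)
  have : φ T < φ t₁ :=
    hmono ⟨le_refl T, hTlt.le⟩ ⟨hTlt.le, le_refl t₁⟩ hTlt
  linarith
end

section
/- (Scalar comparison lemma underlying Theorem 1.) Let α : ℝ → ℝ be strictly increasing with α(0) = 0, let T ≥ 0, and let u : ℝ → ℝ be differentiable on [0, T] (in particular continuous on [0, T]) with u′(t) ≥ −α(u(t)) for every t ∈ [0, T]. If u(0) ≥ 0, then u(t) ≥ 0 for every t ∈ [0, T]. -/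
/-- **Scalar comparison lemma.** If `α` is strictly increasing with `α 0 = 0`,
`u` is differentiable on `[0, T]` with derivative `u'` satisfying
`u' t ≥ -α (u t)` there, and `u 0 ≥ 0`, then `u t ≥ 0` for all `t ∈ [0, T]`. -/
theorem scalar_comparison
    (α : ℝ → ℝ) (hα : StrictMono α) (hα0 : α 0 = 0)
    (T : ℝ) (hT : 0 ≤ T)
    (u u' : ℝ → ℝ)
    (hu : ∀ t ∈ Set.Icc (0 : ℝ) T, HasDerivWithinAt u (u' t) (Set.Icc (0 : ℝ) T) t)
    (hineq : ∀ t ∈ Set.Icc (0 : ℝ) T, u' t ≥ -α (u t))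
    (h0 : u 0 ≥ 0) :
    ∀ t ∈ Set.Icc (0 : ℝ) T, u t ≥ 0 := by
  intro t0 ht0
  by_contra hneg
  push_neg at hneg
  obtain ⟨ht00, ht0T⟩ := ht0
  have hucont : ContinuousOn u (Set.Icc (0 : ℝ) T) :=
    fun x hx => (hu x hx).continuousWithinAt
  -- the set where u ≥ 0 inside [0, t0]
  set S : Set ℝ := {s | s ∈ Set.Icc (0 : ℝ) t0 ∧ 0 ≤ u s} with hS
  have hsub : Set.Icc (0 : ℝ) t0 ⊆ Set.Icc (0 : ℝ) T :=
    Set.Icc_subset_Icc le_rfl ht0T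
  have hScl : IsClosed S := by
    have : S = Set.Icc (0 : ℝ) t0 ∩ (Set.Icc (0 : ℝ) t0 ∩ u ⁻¹' Set.Ici 0) := by
      ext x
      simp only [hS, Set.mem_setOf_eq, Set.mem_inter_iff, Set.mem_preimage, Set.mem_Ici]
      tauto
    rw [this]
    exact isClosed_Icc.inter
      ((hucont.mono hsub).preimage_isClosed_of_isClosed isClosed_Icc isClosed_Ici)
  have hSne : S.Nonempty := ⟨0, ⟨le_rfl, ht00⟩, h0⟩
  have hSbdd : BddAbove S := ⟨t0, fun x hx => hx.1.2⟩
  set s := sSup S with hs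
  have hsS : s ∈ S := hScl.csSup_mem hSne hSbdd
  have hs0 : 0 ≤ s := hsS.1.1
  have hst0 : s ≤ t0 := hsS.1.2
  have hus : 0 ≤ u s := hsS.2
  have hslt : s < t0 := by
    rcases lt_or_eq_of_le hst0 with h | h
    · exact h
    · exact absurd (h ▸ hus) (not_le.mpr hneg)
  -- on (s, t0], u < 0
  have hneg' : ∀ x, s < x → x ≤ t0 → u x < 0 := by
    intro x hsx hxt0
    by_contra hge
    push_neg at hge
    have : x ∈ S := ⟨⟨hs0.trans hsx.le, hxt0⟩, hge⟩
    exact absurd (le_csSup hSbdd this) (not_le.mpr hsx)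
  -- u is monotone on [s, t0]
  have hmono : MonotoneOn u (Set.Icc s t0) := by
    apply monotoneOn_of_hasDerivWithinAt_nonneg (f' := u') (convex_Icc s t0)
    · exact hucont.mono (Set.Icc_subset_Icc hs0 ht0T)
    · intro x hx
      rw [interior_Icc] at hx ⊢
      have hx' : x ∈ Set.Icc (0 : ℝ) T :=
        ⟨hs0.trans hx.1.le, hx.2.le.trans ht0T⟩
      exact (hu x hx').mono (fun y hy => ⟨hs0.trans hy.1.le, hy.2.le.trans ht0T⟩)
    · intro x hx
      rw [interior_Icc] at hx
      have hx' : x ∈ Set.Icc (0 : ℝ) T :=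
        ⟨hs0.trans hx.1.le, hx.2.le.trans ht0T⟩
      have hux : u x < 0 := hneg' x hx.1 hx.2.le
      have : α (u x) < 0 := hα0 ▸ hα hux
      linarith [hineq x hx']
  have := hmono ⟨le_rfl, hst0⟩ ⟨hst0, le_rfl⟩ hst0
  linarith
end

section
/- (Convexity of the lifted constraint set of the ProBF program.) Let m be a natural number, let Σ ∈ ℝ^{m×m} be symmetric, σ_ab ∈ ℝ^m, σ_b² ∈ ℝ, and assume the (m+1)×(m+1) block matrix M = [[Σ, σ_ab],[σ_abᵀ, σ_b²]] is positive semidefinite. Define Q(u) = uᵀΣu + 2σ_abᵀu + σ_b². Let a ∈ ℝ^m, b ∈ ℝ, and δ ≥ 0. Then the set C = {(u, s) ∈ ℝ^m × ℝ : Q(u) ≤ s², 0 ≤ s, δ·s ≤ aᵀu + b} is a convex subset of ℝ^m × ℝ. -/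
open Matrix Set

/-!
Lifting `u` to `(u, 1)` turns `Q` into the PSD quadratic form `x ↦ xᵀ M x`. Writing `M = Bᵀ B`
gives `√(xᵀ M x) = ‖B x‖`, so `√Q` is convex, and for `s ≥ 0` the condition `Q u ≤ s²` says
`√(Q u) ≤ s`. Hence `C` is the epigraph of a convex function cut by a half-space.
-/

theorem Matrix.PosSemidef.convexOn_sqrt_dotProduct_mulVec {n : Type*} [Fintype n]
    {N : Matrix n n ℝ} (hN : N.PosSemidef) : ConvexOn ℝ univ fun x => √(x ⬝ᵥ N *ᵥ x) := by
  classical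
  open scoped MatrixOrder in
  obtain ⟨B, rfl⟩ := CStarAlgebra.nonneg_iff_eq_star_mul_self.mp hN.nonneg
  have hnorm : (fun x => √(x ⬝ᵥ (star B * B) *ᵥ x)) =
      norm ∘ ((WithLp.linearEquiv 2 ℝ (n → ℝ)).symm.toLinearMap ∘ₗ B.mulVecLin) := by
    funext x
    have hsq : x ⬝ᵥ (star B * B) *ᵥ x = ∑ i, (B *ᵥ x) i ^ 2 := by
      rw [star_eq_conjTranspose, conjTranspose_eq_transpose_of_trivial, ← mulVec_mulVec,
        dotProduct_mulVec, vecMul_transpose]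
      simp only [dotProduct, sq]
    simp [EuclideanSpace.norm_eq, hsq]
  rw [hnorm]
  exact convexOn_univ_norm.comp_linearMap _

theorem ConvexOn.comp_sumElim_const {ι κ : Type*} {f : (ι ⊕ κ → ℝ) → ℝ}
    (hf : ConvexOn ℝ univ f) (c : κ → ℝ) : ConvexOn ℝ univ fun x => f (Sum.elim x c) := by
  refine ⟨convex_univ, fun x _ y _ θ η hθ hη hθη => ?_⟩
  have hcomb : Sum.elim (θ • x + η • y) c = θ • Sum.elim x c + η • Sum.elim y c := by
    ext (i | i) <;> simp [← add_mul, hθη]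
  simpa only [hcomb] using hf.2 trivial trivial hθ hη hθη

theorem sumElim_one_dotProduct_fromBlocks_mulVec {m R : Type*} [Fintype m] [CommRing R]
    (A : Matrix m m R) (c : m → R) (d : R) (x : m → R) :
    Sum.elim x (fun _ => 1) ⬝ᵥ fromBlocks A (replicateCol (Fin 1) c) (replicateRow (Fin 1) c)
        (of fun _ _ => d) *ᵥ Sum.elim x (fun _ => 1) = x ⬝ᵥ A *ᵥ x + 2 * (c ⬝ᵥ x) + d := by
  rw [fromBlocks_mulVec, sumElim_dotProduct_sumElim]
  simp only [dotProduct, mulVec, replicateCol, replicateRow, of_apply, Sum.elim_comp_inl,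
    Sum.elim_comp_inr, Pi.add_apply, Finset.univ_unique, Fin.default_eq_zero, Fin.isValue,
    Finset.sum_const, Finset.card_singleton, one_smul, one_mul, mul_one, mul_add, mul_comm,
    Finset.sum_add_distrib]
  ring

theorem probf_lifted_set_convex_general
    (m : ℕ) (Sig : Matrix (Fin m) (Fin m) ℝ)
    (σab : Fin m → ℝ) (σb2 : ℝ)
    (hM : (Matrix.fromBlocks Sig (Matrix.replicateCol (Fin 1) σab)
        (Matrix.replicateRow (Fin 1) σab) (Matrix.of fun _ _ => σb2)).PosSemidef)
    (a : Fin m → ℝ) (b : ℝ) (δ : ℝ) :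
    Convex ℝ {p : (Fin m → ℝ) × ℝ |
      p.1 ⬝ᵥ Sig *ᵥ p.1 + 2 * (σab ⬝ᵥ p.1) + σb2 ≤ p.2 ^ 2 ∧ 0 ≤ p.2 ∧
        δ * p.2 ≤ a ⬝ᵥ p.1 + b} := by
  have hQ : ConvexOn ℝ univ fun u => √(u ⬝ᵥ Sig *ᵥ u + 2 * (σab ⬝ᵥ u) + σb2) := by
    simpa only [sumElim_one_dotProduct_fromBlocks_mulVec] using
      hM.convexOn_sqrt_dotProduct_mulVec.comp_sumElim_const (fun _ => 1)
  have hhalf : Convex ℝ {p : (Fin m → ℝ) × ℝ | δ * p.2 - a ⬝ᵥ p.1 ≤ b} :=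
    convex_halfSpace_le
      ⟨fun p q => by simp only [Prod.snd_add, Prod.fst_add, dotProduct_add]; ring,
        fun c p => by simp only [Prod.smul_snd, smul_eq_mul, Prod.smul_fst, dotProduct_smul]; ring⟩ b
  convert hQ.convex_epigraph.inter hhalf using 1
  ext ⟨u, s⟩
  simp only [mem_ofPred_eq, mem_inter_iff, mem_univ, true_and, Real.sqrt_le_iff,
    sub_le_iff_le_add']
  tauto

/-- **Convexity of the lifted constraint set of the ProBF program.**
The set `C = {(u, s) | Q u ≤ s², 0 ≤ s, δ s ≤ aᵀu + b}` is convex. -/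
theorem probf_lifted_set_convex
    (m : ℕ) (Sig : Matrix (Fin m) (Fin m) ℝ) (hSig : Sig.IsSymm)
    (σab : Fin m → ℝ) (σb2 : ℝ)
    (hM : (Matrix.fromBlocks Sig (Matrix.replicateCol (Fin 1) σab)
        (Matrix.replicateRow (Fin 1) σab) (Matrix.of fun _ _ => σb2)).PosSemidef)
    (a : Fin m → ℝ) (b : ℝ) (δ : ℝ) (hδ : 0 ≤ δ) :
    Convex ℝ {p : (Fin m → ℝ) × ℝ |
      p.1 ⬝ᵥ Sig *ᵥ p.1 + 2 * (σab ⬝ᵥ p.1) + σb2 ≤ p.2 ^ 2 ∧ 0 ≤ p.2 ∧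
        δ * p.2 ≤ a ⬝ᵥ p.1 + b} :=
  probf_lifted_set_convex_general m Sig σab σb2 hM a b δ
end
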